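/- arXiv:2009.08571 — 2 statements merged into one kernel-verified Lean document; each statement's English description precedes it below -/
import Mathlib

section
/- Let $\mathcal{O}$ be the ring of integers of a nonarchimedean local field, $\mathfrak{p}$ its maximal ideal, $n \geq 2$, and $m \geq 0$. Let $K_{n-1,1} = \{\begin{pmatrix} a & b \\ 0 & 1 \end{pmatrix} : a \in \mathrm{GL}_{n-1}(\mathcal{O}), b \in \mathcal{O}^{n-1}\}$, let $K(\mathfrak{p}^m) = \{k \in \mathrm{GL}_n(\mathcal{O}) : k \equiv 1_n \bmod \mathfrak{p}^m\}$, and let $K_1(\mathfrak{p}^m) = \{\begin{pmatrix} a & b \\ c & d \end{pmatrix} \in \mathrm{GL}_n(\mathcal{O}) : c \equiv 0, d \equiv 1 \bmod \mathfrak{p}^m\}$. Then $K_{n-1,1} \cdot K(\mathfrak{p}^m) = K_1(\mathfrak{p}^m)$ as subsets of $\mathrm{GL}_n(\mathcal{O})$. -/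
/-!
Multiplying on the left by an element of `K_{n-1,1}` does not change the last row, so the product
lies in `K₁(𝔭^m)`. Conversely, if the last row `r` of `g` is `≡ e_n mod 𝔭^m`, its last entry is a
unit (for `m ≥ 1`), so the matrix `k` obtained from `1` by replacing its last row with `r` is
invertible and lies in `K(𝔭^m)`; since `g` and `k` share their last row, `g k⁻¹` has last row
`e_n k k⁻¹ = e_n`, giving `g = (g k⁻¹) k`.
-/

open Pointwise Matrix Set

namespace Matrix

variable {ι R : Type*} [Fintype ι] [CommRing R]

theorem mul_row_eq_of_row_eq {A B : Matrix ι ι R} (C : Matrix ι ι R) {i : ι} (h : A i = B i) :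
    (A * C) i = (B * C) i := by
  ext j
  simp only [mul_apply, h]

variable [DecidableEq ι]

theorem det_one_updateRow (i : ι) (r : ι → R) : ((1 : Matrix ι ι R).updateRow i r).det = r i := by
  have hr : ∑ k, r k • (1 : Matrix ι ι R) k = r := by
    ext j
    simp [Finset.sum_apply, one_apply]
  simpa [hr] using det_updateRow_sum (1 : Matrix ι ι R) i r

/-- `K_{n-1,1}` when `l` is the last index. -/
def mirabolic (l : ι) : Set (GL ι R) :=
  {k | ∀ j, (k : Matrix ι ι R) l j = if j = l then 1 else 0}

def principalCongruence (I : Ideal R) : Set (GL ι R) :=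
  {k | ∀ i j, (k : Matrix ι ι R) i j - (1 : Matrix ι ι R) i j ∈ I}

def mirabolicCongruence (I : Ideal R) (l : ι) : Set (GL ι R) :=
  {k | (∀ j, j ≠ l → (k : Matrix ι ι R) l j ∈ I) ∧ (k : Matrix ι ι R) l l - 1 ∈ I}

theorem mem_mirabolic_iff {l : ι} {k : GL ι R} :
    k ∈ mirabolic l ↔ (k : Matrix ι ι R) l = (1 : Matrix ι ι R) l := by
  simp only [mirabolic, Set.mem_ofPred_eq, funext_iff, one_apply, eq_comm (a := l)]

theorem mem_mirabolicCongruence_iff {I : Ideal R} {l : ι} {k : GL ι R} :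
    k ∈ mirabolicCongruence I l ↔ ∀ j, (k : Matrix ι ι R) l j - (1 : Matrix ι ι R) l j ∈ I := by
  refine ⟨fun ⟨hoff, hdiag⟩ j => ?_, fun h => ⟨fun j hj => ?_, by simpa using h l⟩⟩
  · rcases eq_or_ne j l with rfl | hj
    · simpa using hdiag
    · simpa [one_apply_ne' hj] using hoff j hj
  · simpa [one_apply_ne' hj] using h j

theorem mirabolic_mul_principalCongruence_subset (I : Ideal R) (l : ι) :
    mirabolic l * principalCongruence I ⊆ mirabolicCongruence I l := by
  rintro _ ⟨a, ha, b, hb, rfl⟩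
  rw [mem_mirabolicCongruence_iff]
  intro j
  rw [Units.val_mul, mul_row_eq_of_row_eq _ (mem_mirabolic_iff.mp ha), one_mul]
  exact hb l j

theorem mirabolicCongruence_subset_mirabolic_mul_principalCongruence {I : Ideal R}
    (hI : I ≤ Ideal.jacobson ⊥) (l : ι) :
    mirabolicCongruence I l ⊆ mirabolic l * principalCongruence I := by
  intro g hg
  rw [mem_mirabolicCongruence_iff] at hg
  have hunit : IsUnit ((g : Matrix ι ι R) l l) :=
    Ideal.isUnit_of_sub_one_mem_jacobson_bot _ (hI (by simpa using hg l))
  let k : GL ι R := GeneralLinearGroup.mk'' ((1 : Matrix ι ι R).updateRow l ((g : Matrix ι ι R) l))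
    (by rwa [det_one_updateRow])
  have hrow : (g : Matrix ι ι R) l = (k : Matrix ι ι R) l := (updateRow_self ..).symm
  refine ⟨g * k⁻¹, ?_, k, fun i j => ?_, inv_mul_cancel_right g k⟩
  · rw [mem_mirabolic_iff, Units.val_mul, mul_row_eq_of_row_eq _ hrow, ← Units.val_mul,
      mul_inv_cancel, Units.val_one]
  · rcases eq_or_ne i l with rfl | hi
    · simpa [k] using hg j
    · simp [k, updateRow_ne hi]

theorem mirabolic_mul_principalCongruence {I : Ideal R} (hI : I ≤ Ideal.jacobson ⊥) (l : ι) :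
    mirabolic l * principalCongruence I = mirabolicCongruence I l :=
  (mirabolic_mul_principalCongruence_subset I l).antisymm
    (mirabolicCongruence_subset_mirabolic_mul_principalCongruence hI l)

theorem mirabolic_mul_principalCongruence_top (l : ι) :
    mirabolic l * principalCongruence (⊤ : Ideal R) = mirabolicCongruence ⊤ l := by
  have hK : principalCongruence (⊤ : Ideal R) = (univ : Set (GL ι R)) := by
    simp [principalCongruence]
  have hK₁ : mirabolicCongruence (⊤ : Ideal R) l = (univ : Set (GL ι R)) := by
    simp [mirabolicCongruence]
  rw [hK, hK₁, mul_univ_of_one_mem (mem_mirabolic_iff.mpr rfl)]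

end Matrix

/-- `K_{n-1,1} ⬝ K(𝔭^m) = K₁(𝔭^m)` inside `GL_n(𝒪)`: the set of matrices whose last row
is exactly `e_n`, multiplied by the principal congruence subgroup of level `m`, equals the
set of matrices whose last row is congruent to `e_n` mod `𝔭^m`. -/
theorem stmt4 (𝒪 : Type*) [CommRing 𝒪] [IsDomain 𝒪] [IsDiscreteValuationRing 𝒪]
    (n m : ℕ) (hn : 2 ≤ n) :
    ({k : GL (Fin n) 𝒪 | ∀ j : Fin n,
        (k : Matrix (Fin n) (Fin n) 𝒪) (⟨n - 1, by omega⟩ : Fin n) j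
          = if j = (⟨n - 1, by omega⟩ : Fin n) then 1 else 0} *
      {k : GL (Fin n) 𝒪 | ∀ i j : Fin n,
        (k : Matrix (Fin n) (Fin n) 𝒪) i j - (1 : Matrix (Fin n) (Fin n) 𝒪) i j
          ∈ IsLocalRing.maximalIdeal 𝒪 ^ m}) =
    {k : GL (Fin n) 𝒪 |
      (∀ j : Fin n, j ≠ (⟨n - 1, by omega⟩ : Fin n) →
        (k : Matrix (Fin n) (Fin n) 𝒪) (⟨n - 1, by omega⟩ : Fin n) j
          ∈ IsLocalRing.maximalIdeal 𝒪 ^ m) ∧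
      (k : Matrix (Fin n) (Fin n) 𝒪) (⟨n - 1, by omega⟩ : Fin n) (⟨n - 1, by omega⟩ : Fin n) - 1
        ∈ IsLocalRing.maximalIdeal 𝒪 ^ m} := by
  rcases Nat.eq_zero_or_pos m with rfl | hm
  · rw [pow_zero, Ideal.one_eq_top]
    exact mirabolic_mul_principalCongruence_top _
  · refine mirabolic_mul_principalCongruence ?_ _
    rw [IsLocalRing.jacobson_eq_maximalIdeal ⊥ bot_ne_top]
    exact Ideal.pow_le_self hm.ne'
end

section
/- Let $\mathcal{O}$ be the ring of integers of a nonarchimedean local field with residue field $\mathbb{F}_q$, and let $n \geq 2$. Suppose $a \in \mathrm{Mat}_{(n-1)\times(n-1)}(\mathcal{O})$ and $c \in \mathrm{Mat}_{1\times(n-1)}(\mathcal{O})$ are such that the $n \times n$ matrix with top-left block $a$ and bottom-left block $c$ extends to an element of $\mathrm{GL}_n(\mathcal{O})$, and $c$ has some entry in $\mathcal{O}^{\times}$. Then there exists $\beta \in \mathrm{Mat}_{(n-1)\times 1}(\mathcal{O})$ such that $\det(a - \beta c) \in \mathcal{O}^{\times}$. -/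
/-!
Reduce modulo the maximal ideal: a determinant over a local ring is a unit exactly when its
image in the residue field `k` is nonzero, and invertibility of `(a b; c d)` says that
`ker ā ∩ ker c̄ = 0` over `k`. Over a field this suffices: if `ā` is singular, take `β̄` outside
the image of `ā`; a vector `y ≠ 0` with `ā y = (c̄ ⬝ y) β̄` would put `β̄` in that image unless
`c̄ ⬝ y = 0`, and then `y ∈ ker ā ∩ ker c̄`. Any lift of `β̄` to `𝒪` works.
-/

namespace Matrix

variable {m : Type*} [Fintype m] [DecidableEq m]

theorem eq_zero_of_isUnit_fromBlocks {R : Type*} [CommRing R] {n : Type*} [Fintype n]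
    [DecidableEq n] {A : Matrix m m R} {B : Matrix m n R} {C : Matrix n m R} {D : Matrix n n R}
    (hM : IsUnit (fromBlocks A B C D)) {x : m → R} (hA : A *ᵥ x = 0) (hC : C *ᵥ x = 0) :
    x = 0 := by
  have hzero : Sum.elim x (0 : n → R) = 0 := by
    apply mulVec_injective_of_isUnit hM
    simp [fromBlocks_mulVec, hA, hC]
  funext i
  exact congrFun hzero (Sum.inl i)

theorem exists_det_sub_vecMulVec_ne_zero {K : Type*} [Field K] (A : Matrix m m K) (C : m → K)
    (hker : ∀ x, A *ᵥ x = 0 → C ⬝ᵥ x = 0 → x = 0) :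
    ∃ β : m → K, (A - vecMulVec β C).det ≠ 0 := by
  by_cases hA : IsUnit A
  · exact ⟨0, by simpa [isUnit_iff_isUnit_det] using hA⟩
  obtain ⟨β, hβ⟩ : ∃ β, ∀ y, A *ᵥ y ≠ β := by
    rw [← mulVec_surjective_iff_isUnit] at hA
    simpa [Function.Surjective] using hA
  refine ⟨β, fun hdet => ?_⟩
  obtain ⟨y, hy0, hy⟩ := exists_mulVec_eq_zero_iff.mpr hdet
  have hAy : A *ᵥ y = (C ⬝ᵥ y) • β := by
    rwa [sub_mulVec, vecMulVec_mulVec, op_smul_eq_smul, sub_eq_zero] at hy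
  by_cases hCy : C ⬝ᵥ y = 0
  · exact hy0 (hker y (by simp [hAy, hCy]) hCy)
  · apply hβ ((C ⬝ᵥ y)⁻¹ • y)
    rw [mulVec_smul, hAy, smul_smul, inv_mul_cancel₀ hCy, one_smul]

open IsLocalRing in
theorem exists_isUnit_det_sub_vecMulVec {R : Type*} [CommRing R] [IsLocalRing R]
    (A : Matrix m m R) (C : m → R)
    (hker : ∀ x, A.map (residue R) *ᵥ x = 0 → residue R ∘ C ⬝ᵥ x = 0 → x = 0) :
    ∃ β : m → R, IsUnit (A - vecMulVec β C).det := by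
  obtain ⟨β', hβ'⟩ := exists_det_sub_vecMulVec_ne_zero _ _ hker
  choose β hβ using fun i => residue_surjective (β' i)
  refine ⟨β, ?_⟩
  have hmap : (A - vecMulVec β C).map (residue R) =
      A.map (residue R) - vecMulVec β' (residue R ∘ C) := by
    ext i j
    simp [vecMulVec_apply, hβ]
  rw [← residue_ne_zero_iff_isUnit, RingHom.map_det, RingHom.mapMatrix_apply, hmap]
  exact hβ'

end Matrix

theorem stmt7_general (𝒪 : Type*) [CommRing 𝒪] [IsDomain 𝒪] [IsDiscreteValuationRing 𝒪]
    (n : ℕ)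
    (a : Matrix (Fin (n - 1)) (Fin (n - 1)) 𝒪)
    (c : Matrix (Fin 1) (Fin (n - 1)) 𝒪)
    (hext : ∃ (b : Matrix (Fin (n - 1)) (Fin 1) 𝒪) (d : Matrix (Fin 1) (Fin 1) 𝒪),
      IsUnit (Matrix.fromBlocks a b c d)) :
    ∃ β : Matrix (Fin (n - 1)) (Fin 1) 𝒪, IsUnit (a - β * c).det := by
  obtain ⟨b, d, hM⟩ := hext
  obtain ⟨β, hβ⟩ := Matrix.exists_isUnit_det_sub_vecMulVec a (c 0) fun x hax hcx =>
    Matrix.eq_zero_of_isUnit_fromBlocks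
      (by simpa [Matrix.fromBlocks_map] using hM.map (IsLocalRing.residue 𝒪).mapMatrix) hax
      (funext fun i => by simpa [Subsingleton.elim i 0, Matrix.mulVec, dotProduct] using hcx)
  refine ⟨Matrix.replicateCol (Fin 1) β, ?_⟩
  convert hβ using 3
  ext i j
  simp [Matrix.mul_apply, Matrix.vecMulVec_apply]

/-- Chang's lemma: let `𝒪` be a complete discrete valuation ring with finite residue field,
`n ≥ 2`, and suppose the blocks `a` (size `(n-1)×(n-1)`) and `c` (size `1×(n-1)`) extend to
an invertible matrix `(a b; c d)` over `𝒪`, with some entry of `c` a unit. Then there is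
`β ∈ 𝒪^{n-1}` with `det(a - βc) ∈ 𝒪ˣ`. -/
theorem stmt7 (𝒪 : Type*) [CommRing 𝒪] [IsDomain 𝒪] [IsDiscreteValuationRing 𝒪]
    [IsAdicComplete (IsLocalRing.maximalIdeal 𝒪) 𝒪]
    (hfin : Finite (𝒪 ⧸ IsLocalRing.maximalIdeal 𝒪))
    (n : ℕ) (hn : 2 ≤ n)
    (a : Matrix (Fin (n - 1)) (Fin (n - 1)) 𝒪)
    (c : Matrix (Fin 1) (Fin (n - 1)) 𝒪)
    (hext : ∃ (b : Matrix (Fin (n - 1)) (Fin 1) 𝒪) (d : Matrix (Fin 1) (Fin 1) 𝒪),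
      IsUnit (Matrix.fromBlocks a b c d))
    (hc : ∃ j : Fin (n - 1), IsUnit (c 0 j)) :
    ∃ β : Matrix (Fin (n - 1)) (Fin 1) 𝒪, IsUnit (a - β * c).det :=
  stmt7_general 𝒪 n a c hext
end
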